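/- S_1 ∩ S_3 ∩ S_5 ⊆ S_2 ∪ S_4; equivalently, the set G_{{2,4}} = (S_1 ∩ S_3 ∩ S_5) \ (S_2 ∪ S_4) is empty. (The assertion G_{24} = ∅ in Lemma 3.6, the case m = 5.) -/

import Mathlib

/-!
Because all generators have nonnegative entries, an element of `S` vanishing in coordinate `i`
only involves the generators with `i`-th entry zero. Hence `S_i` consists of the integer
combinations `∑ c_j s_j` with `c_j ≥ 0` whenever the `i`-th entry of `s_j` is positive.

Write `x ∈ S_1 ∩ S_3` as `∑ a_j s_j = ∑ b_j s_j` with `a_2, a_3, a_4 ≥ 0` and `b_1, b_4, b_5 ≥ 0`.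
If `a_5 ≥ 0` then `x ∈ S_2`, and if `b_2 ≥ 0` then `x ∈ S_4`. Otherwise `b_3 ≥ 0`, so `x ∈ S_2`:
for `d = a - b` we would have `d_2, d_3 > 0 > d_5`, and coordinates 1, 5, 3 of `∑ d_j s_j = 0`
force in turn `d_4 < 0`, `d_1 < 0` and `d_5 > 0`. (Paper coordinates `1, …, 5` are the
indices `0, …, 4` of `Fin 5`.)
-/

/-- For a submonoid `S` of `ℤ^n` and a coordinate `i`, the paper's set
`S_i = S − S_{(i)}`, where differences are taken against the subgroup `H_i`
generated by `S ∩ F_i` with `F_i = {x : x_i = 0}`. -/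
def paperSi {n : ℕ} (S : AddSubmonoid (Fin n → ℤ)) (i : Fin n) : Set (Fin n → ℤ) :=
  {x | ∃ s ∈ S, ∃ t ∈ AddSubgroup.closure {y : Fin n → ℤ | y ∈ S ∧ y i = 0}, x = s - t}

section
variable {ι : Type*} [Fintype ι] {n : ℕ} {g : ι → Fin n → ℤ} {i : Fin n}

lemma exists_sum_zsmul_of_mem_closure_coord_eq_zero (hg : ∀ j, 0 ≤ g j) {t : Fin n → ℤ}
    (ht : t ∈ AddSubgroup.closure
      {y | y ∈ AddSubmonoid.closure (Set.range g) ∧ y i = 0}) :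
    ∃ d : ι → ℤ, (∀ j, g j i ≠ 0 → d j = 0) ∧ t = ∑ j, d j • g j := by
  induction ht using AddSubgroup.closure_induction with
  | mem y hy =>
    obtain ⟨hyS, hyi⟩ := hy
    obtain ⟨a, rfl⟩ := AddSubmonoid.mem_closure_range_iff_of_fintype.mp hyS
    have hterms : ∀ j, a j • g j i = 0 := by
      simp only [Finset.sum_apply, Pi.smul_apply] at hyi
      intro j
      exact (Finset.sum_eq_zero_iff_of_nonneg fun j _ ↦ nsmul_nonneg (hg j i) _).mp hyi j
        (Finset.mem_univ j)
    refine ⟨fun j ↦ a j, fun j hj ↦ ?_, by simp only [natCast_zsmul]⟩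
    simpa [hj] using hterms j
  | zero => exact ⟨0, fun _ _ ↦ rfl, by simp⟩
  | add _ _ _ _ ih₁ ih₂ =>
    obtain ⟨d₁, hd₁, rfl⟩ := ih₁
    obtain ⟨d₂, hd₂, rfl⟩ := ih₂
    refine ⟨d₁ + d₂, fun j hj ↦ by simp [hd₁ j hj, hd₂ j hj], ?_⟩
    simp only [Pi.add_apply, add_smul, Finset.sum_add_distrib]
  | neg _ _ ih =>
    obtain ⟨d, hd, rfl⟩ := ih
    exact ⟨-d, fun j hj ↦ by simp [hd j hj], by simp⟩

theorem mem_paperSi_closure_range_iff (hg : ∀ j, 0 ≤ g j) {x : Fin n → ℤ} :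
    x ∈ paperSi (AddSubmonoid.closure (Set.range g)) i ↔
      ∃ c : ι → ℤ, (∀ j, g j i ≠ 0 → 0 ≤ c j) ∧ x = ∑ j, c j • g j := by
  constructor
  · rintro ⟨s, hs, t, ht, rfl⟩
    obtain ⟨a, rfl⟩ := AddSubmonoid.mem_closure_range_iff_of_fintype.mp hs
    obtain ⟨d, hd, rfl⟩ := exists_sum_zsmul_of_mem_closure_coord_eq_zero hg ht
    refine ⟨fun j ↦ a j - d j, fun j hj ↦ by simp [hd j hj], ?_⟩
    simp only [sub_smul, Finset.sum_sub_distrib, natCast_zsmul]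
  · rintro ⟨c, hc, rfl⟩
    refine ⟨∑ j, (c j).toNat • g j, ?_, ∑ j, ((c j).toNat - c j) • g j, ?_, ?_⟩
    · exact sum_mem fun j _ ↦ nsmul_mem (AddSubmonoid.subset_closure (Set.mem_range_self j)) _
    · refine sum_mem fun j _ ↦ ?_
      by_cases hj : g j i = 0
      · exact zsmul_mem (AddSubgroup.subset_closure (show g j ∈ {y | _ ∧ y i = 0} from
          ⟨AddSubmonoid.subset_closure (Set.mem_range_self j), hj⟩)) _
      · simp [Int.toNat_of_nonneg (hc j hj)]
    · simp only [sub_smul, Finset.sum_sub_distrib, natCast_zsmul, sub_sub_cancel]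
end

lemma sign_trichotomy_of_coord_eq {a b : Fin 5 → ℤ}
    {s13 s15 s21 s25 s31 s35 s41 s43 s53 : ℤ}
    (e1 : a 1 * s21 + a 2 * s31 + a 3 * s41 = b 1 * s21 + b 2 * s31 + b 3 * s41)
    (e3 : a 0 * s13 + a 3 * s43 + a 4 * s53 = b 0 * s13 + b 3 * s43 + b 4 * s53)
    (e5 : a 0 * s15 + a 1 * s25 + a 2 * s35 = b 0 * s15 + b 1 * s25 + b 2 * s35)
    (h13 : 0 < s13) (h15 : 0 < s15) (h21 : 0 < s21) (h25 : 0 < s25) (h31 : 0 < s31)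
    (h35 : 0 < s35) (h41 : 0 < s41) (h43 : 0 < s43) (h53 : 0 < s53)
    (ha1 : 0 ≤ a 1) (ha2 : 0 ≤ a 2) (hb4 : 0 ≤ b 4) :
    0 ≤ a 4 ∨ 0 ≤ b 1 ∨ 0 ≤ b 2 := by
  by_contra! ⟨ha4, hb1, hb2⟩
  have hd1 : 0 < a 1 - b 1 := by omega
  have hd2 : 0 < a 2 - b 2 := by omega
  have hd3 : a 3 - b 3 < 0 := by nlinarith [mul_pos hd1 h21, mul_pos hd2 h31]
  have hd0 : a 0 - b 0 < 0 := by nlinarith [mul_pos hd1 h25, mul_pos hd2 h35]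
  nlinarith [mul_pos_of_neg_of_neg hd0 (neg_neg_of_pos h13),
    mul_pos_of_neg_of_neg hd3 (neg_neg_of_pos h43)]

/-- The assertion `G_{24} = ∅` in Lemma 3.6 (the case `m = 5`): with the
Hochster-transformed generators
`s1 = (0, 0, s13, s14, s15)`, `s2 = (s21, 0, 0, s24, s25)`, `s3 = (s31, s32, 0, 0, s35)`,
`s4 = (s41, s42, s43, 0, 0)`, `s5 = (0, s52, s53, s54, 0)` (all the listed entries positive),
one has `S_1 ∩ S_3 ∩ S_5 ⊆ S_2 ∪ S_4`, i.e.
`G_{{2,4}} = (S_1 ∩ S_3 ∩ S_5) \ (S_2 ∪ S_4) = ∅`.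
(Coordinates `1,…,5` of the paper correspond to the indices `0,…,4` of `Fin 5`.) -/
theorem stmt6 (s13 s14 s15 s21 s24 s25 s31 s32 s35 s41 s42 s43 s52 s53 s54 : ℕ)
    (hpos : 0 < s13 ∧ 0 < s14 ∧ 0 < s15 ∧ 0 < s21 ∧ 0 < s24 ∧ 0 < s25 ∧ 0 < s31 ∧ 0 < s32
      ∧ 0 < s35 ∧ 0 < s41 ∧ 0 < s42 ∧ 0 < s43 ∧ 0 < s52 ∧ 0 < s53 ∧ 0 < s54)
    (s1 s2 s3 s4 s5 : Fin 5 → ℤ)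
    (hs1 : s1 = ![0, 0, (s13 : ℤ), (s14 : ℤ), (s15 : ℤ)])
    (hs2 : s2 = ![(s21 : ℤ), 0, 0, (s24 : ℤ), (s25 : ℤ)])
    (hs3 : s3 = ![(s31 : ℤ), (s32 : ℤ), 0, 0, (s35 : ℤ)])
    (hs4 : s4 = ![(s41 : ℤ), (s42 : ℤ), (s43 : ℤ), 0, 0])
    (hs5 : s5 = ![0, (s52 : ℤ), (s53 : ℤ), (s54 : ℤ), 0])
    (S : AddSubmonoid (Fin 5 → ℤ))
    (hS : S = AddSubmonoid.closure {s1, s2, s3, s4, s5}) :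
    (paperSi S 0 ∩ paperSi S 2 ∩ paperSi S 4 ⊆ paperSi S 1 ∪ paperSi S 3) ∧
      (paperSi S 0 ∩ paperSi S 2 ∩ paperSi S 4) \ (paperSi S 1 ∪ paperSi S 3) = ∅ := by
  obtain ⟨h13, -, h15, h21, -, h25, h31, -, h35, h41, -, h43, -, h53, -⟩ := hpos
  set g : Fin 5 → Fin 5 → ℤ := ![s1, s2, s3, s4, s5]
  have hg : ∀ j, 0 ≤ g j := by
    intro j k; fin_cases j <;> fin_cases k <;> simp [g, hs1, hs2, hs3, hs4, hs5]
  rw [show {s1, s2, s3, s4, s5} = Set.range g by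
    simp only [g, Matrix.range_cons, Matrix.range_empty, Set.union_empty, Set.singleton_union]] at hS
  have key : paperSi S 0 ∩ paperSi S 2 ∩ paperSi S 4 ⊆ paperSi S 1 ∪ paperSi S 3 := by
    rintro x ⟨⟨hx0, hx2⟩, -⟩
    simp only [Set.mem_union, hS, mem_paperSi_closure_range_iff hg] at hx0 hx2 ⊢
    obtain ⟨a, ha, rfl⟩ := hx0
    obtain ⟨b, hb, hab⟩ := hx2
    obtain ⟨ha1, ha2, ha3⟩ : 0 ≤ a 1 ∧ 0 ≤ a 2 ∧ 0 ≤ a 3 := by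
      simpa [Fin.forall_fin_succ, g, hs1, hs2, hs3, hs4, hs5, h21.ne', h31.ne', h41.ne'] using ha
    obtain ⟨hb0, hb3, hb4⟩ : 0 ≤ b 0 ∧ 0 ≤ b 3 ∧ 0 ≤ b 4 := by
      simpa [Fin.forall_fin_succ, g, hs1, hs2, hs3, hs4, hs5, h13.ne', h43.ne', h53.ne'] using hb
    have e1 : a 1 * s21 + a 2 * s31 + a 3 * s41 = b 1 * s21 + b 2 * s31 + b 3 * s41 := by
      simpa [Fin.sum_univ_five, g, hs1, hs2, hs3, hs4, hs5] using congrFun hab 0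
    have e3 : a 0 * s13 + a 3 * s43 + a 4 * s53 = b 0 * s13 + b 3 * s43 + b 4 * s53 := by
      simpa [Fin.sum_univ_five, g, hs1, hs2, hs3, hs4, hs5] using congrFun hab 2
    have e5 : a 0 * s15 + a 1 * s25 + a 2 * s35 = b 0 * s15 + b 1 * s25 + b 2 * s35 := by
      simpa [Fin.sum_univ_five, g, hs1, hs2, hs3, hs4, hs5] using congrFun hab 4
    rcases sign_trichotomy_of_coord_eq e1 e3 e5 (by omega) (by omega) (by omega) (by omega)
      (by omega) (by omega) (by omega) (by omega) (by omega) ha1 ha2 hb4 with ha4 | hb1 | hb2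
    · exact Or.inl ⟨a, by simp [Fin.forall_fin_succ, g, hs1, hs2, ha2, ha3, ha4], rfl⟩
    · exact Or.inr ⟨b, by simp [Fin.forall_fin_succ, g, hs3, hs4, hb0, hb1, hb4], hab⟩
    · exact Or.inl ⟨b, by simp [Fin.forall_fin_succ, g, hs1, hs2, hb2, hb3, hb4], hab⟩
  exact ⟨key, Set.sdiff_eq_empty.mpr key⟩
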